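/- arXiv:2401.03709 — 8 statements merged into one kernel-verified Lean document; each statement's English description precedes it below -/
import Mathlib

section
/- The homomorphism β : N^F → N_F induced by the identity of N (inclusion of invariants followed by projection onto coinvariants) has finite kernel and finite cokernel. -/
open Module

/-- The endomorphism `F - 1` of `N`. -/
def frobSub {N : Type*} [AddCommGroup N] (F : AddAut N) : N →+ N :=
  AddEquiv.toAddMonoidHom (F : N ≃+ N) - AddMonoidHom.id N

/-- The invariants `N^F = ker (F - 1)`. -/
def invariantsOf {N : Type*} [AddCommGroup N] (F : AddAut N) : AddSubgroup N :=
  (frobSub F).ker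

/-- The coinvariants `N_F = N / im (F - 1)`. -/
abbrev coinvariantsOf {N : Type*} [AddCommGroup N] (F : AddAut N) :=
  N ⧸ (frobSub F).range

/-- The map `β : N^F → N_F` induced by the identity of `N`. -/
def betaHom {N : Type*} [AddCommGroup N] (F : AddAut N) :
    ↥(invariantsOf F) →+ coinvariantsOf F :=
  (QuotientAddGroup.mk' (frobSub F).range).comp (invariantsOf F).subtype

/-- The cokernel of `β`. -/
abbrev betaCoker {N : Type*} [AddCommGroup N] (F : AddAut N) :=
  coinvariantsOf F ⧸ (betaHom F).range

/-- `ω = |coker β| / |ker β|`. -/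
noncomputable def omegaOf {N : Type*} [AddCommGroup N] (F : AddAut N) : ℕ :=
  Nat.card (betaCoker F) / Nat.card ↥(betaHom F).ker

/-- `τ = rank N - rank N^F`. -/
noncomputable def tauOf {N : Type*} [AddCommGroup N] (F : AddAut N) : ℕ :=
  Module.finrank ℤ N - Module.finrank ℤ ↥(invariantsOf F)

/-!
With `T = 1 + F + ⋯ + F^(n-1)` the norm map, `T (F - 1) = (F - 1) T = F^n - 1 = 0`, `T = n` on
`N^F`, and `T ≡ n` modulo `im (F - 1)`. Hence `n` kills `ker β = N^F ∩ im (F - 1)` and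
`coker β = N / (im (F - 1) + N^F)`; being finitely generated and of bounded exponent, both are finite.
-/

open Finset

instance AddSubgroup.addGroupFG {G : Type*} [AddCommGroup G] [AddGroup.FG G]
    (S : AddSubgroup G) : AddGroup.FG S :=
  have : Module.Finite ℤ G := Module.Finite.iff_addGroup_fg.mpr ‹_›
  Module.Finite.iff_addGroup_fg.mp <|
    Module.Finite.iff_fg.mpr (IsNoetherian.noetherian (AddSubgroup.toIntSubmodule S))

theorem AddCommGroup.finite_of_fg_of_nsmul_eq_zero {G : Type*} [AddCommGroup G] [AddGroup.FG G]
    {n : ℕ} (hn : 0 < n) (h : ∀ x : G, n • x = 0) : Finite G :=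
  AddCommGroup.finite_of_fg_isAddTorsion G fun x =>
    isOfFinAddOrder_iff_nsmul_eq_zero.mpr ⟨n, hn, h x⟩

theorem sub_one_dvd_geom_sum_sub_natCast {R : Type*} [Ring R] (x : R) (n : ℕ) :
    x - 1 ∣ ∑ i ∈ range n, x ^ i - n := by
  have h : ∑ i ∈ range n, x ^ i - n = ∑ i ∈ range n, (x ^ i - 1) := by
    simp [sum_sub_distrib]
  rw [h]
  exact dvd_sum fun i _ => ⟨_, (mul_geom_sum x i).symm⟩

namespace Module.End

variable {R M : Type*} [Ring R] [AddCommGroup M] [Module R M] {f : Module.End R M} {n : ℕ}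

theorem geom_sum_apply_of_apply_eq_self {x : M} (hx : f x = x) :
    (∑ i ∈ range n, f ^ i) x = n • x := by
  simp [LinearMap.sum_apply, pow_apply, Function.iterate_fixed hx]

theorem geom_sum_apply_apply_sub_eq_zero (hf : f ^ n = 1) (y : M) :
    (∑ i ∈ range n, f ^ i) (f y - y) = 0 := by
  simpa [hf] using LinearMap.congr_fun (geom_sum_mul f n) y

theorem apply_geom_sum_apply (hf : f ^ n = 1) (x : M) :
    f ((∑ i ∈ range n, f ^ i) x) = (∑ i ∈ range n, f ^ i) x := by
  simpa [hf, sub_eq_zero] using LinearMap.congr_fun (mul_geom_sum f n) x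

theorem exists_geom_sum_apply_sub_nsmul (f : Module.End R M) (n : ℕ) (x : M) :
    ∃ y, (∑ i ∈ range n, f ^ i) x - n • x = f y - y := by
  obtain ⟨c, hc⟩ := sub_one_dvd_geom_sum_sub_natCast f n
  exact ⟨c x, by simpa using LinearMap.congr_fun hc x⟩

end Module.End

namespace AddAut

variable {N : Type*} [AddCommGroup N]

def toIntEnd (F : AddAut N) : Module.End ℤ N := (F : N ≃+ N).toIntLinearEquiv.toLinearMap

@[simp]
theorem toIntEnd_apply (F : AddAut N) (x : N) : F.toIntEnd x = F x := rfl

theorem toIntEnd_pow (F : AddAut N) (n : ℕ) : F.toIntEnd ^ n = (n • F).toIntEnd := by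
  induction n with
  | zero => rfl
  | succ n ih => ext x; simp [pow_succ', ih, succ_nsmul']

theorem toIntEnd_pow_eq_one {F : AddAut N} {n : ℕ} (h : n • F = 0) : F.toIntEnd ^ n = 1 := by
  rw [toIntEnd_pow, h]
  rfl

end AddAut

section Beta

variable {N : Type*} [AddCommGroup N] {F : AddAut N} {n : ℕ}

theorem mem_invariantsOf_iff {x : N} : x ∈ invariantsOf F ↔ F x = x := sub_eq_zero

theorem mem_range_frobSub_iff {x : N} : x ∈ (frobSub F).range ↔ ∃ y, F y - y = x := Iff.rfl

theorem betaHom_ker_nsmul_eq_zero (hFn : n • F = 0) (x : (betaHom F).ker) : n • x = 0 := by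
  obtain ⟨⟨x, hx⟩, hker⟩ := x
  obtain ⟨y, rfl⟩ : ∃ y, F y - y = x :=
    mem_range_frobSub_iff.mp ((QuotientAddGroup.eq_zero_iff x).mp hker)
  have hfix : F.toIntEnd (F y - y) = F y - y := mem_invariantsOf_iff.mp hx
  have h0 : n • (F y - y) = 0 := by
    rw [← Module.End.geom_sum_apply_of_apply_eq_self hfix]
    exact Module.End.geom_sum_apply_apply_sub_eq_zero (F.toIntEnd_pow_eq_one hFn) y
  exact Subtype.ext (Subtype.ext h0)

theorem betaCoker_nsmul_eq_zero (hFn : n • F = 0) (z : betaCoker F) : n • z = 0 := by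
  obtain ⟨w, rfl⟩ := QuotientAddGroup.mk_surjective z
  obtain ⟨x, rfl⟩ := QuotientAddGroup.mk_surjective w
  set T := ∑ i ∈ range n, F.toIntEnd ^ i
  have hTx : T x ∈ invariantsOf F :=
    mem_invariantsOf_iff.mpr (Module.End.apply_geom_sum_apply (F.toIntEnd_pow_eq_one hFn) x)
  obtain ⟨y, hy⟩ := Module.End.exists_geom_sum_apply_sub_nsmul F.toIntEnd n x
  have hnx : n • x = T x - (F y - y) := by rw [← F.toIntEnd_apply y, ← hy]; abel
  have hy0 : ((F y - y : N) : coinvariantsOf F) = 0 :=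
    (QuotientAddGroup.eq_zero_iff _).mpr (mem_range_frobSub_iff.mpr ⟨y, rfl⟩)
  rw [← QuotientAddGroup.mk_nsmul, ← QuotientAddGroup.mk_nsmul, hnx, QuotientAddGroup.mk_sub, hy0,
    sub_zero, QuotientAddGroup.eq_zero_iff]
  exact ⟨⟨T x, hTx⟩, rfl⟩

end Beta

/-- For a finitely generated abelian group `N` and an automorphism `F` of
finite order, the map `β : N^F → N_F` induced by the identity has finite kernel and
finite cokernel. -/
theorem beta_finite_kernel_and_cokernel {N : Type*} [AddCommGroup N] [AddGroup.FG N]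
    (F : AddAut N) (n : ℕ) (hn : 1 ≤ n) (hFn : n • F = 0) :
    Finite ↥(betaHom F).ker ∧ Finite (betaCoker F) :=
  ⟨AddCommGroup.finite_of_fg_of_nsmul_eq_zero hn (betaHom_ker_nsmul_eq_zero hFn),
    AddCommGroup.finite_of_fg_of_nsmul_eq_zero hn (betaCoker_nsmul_eq_zero hFn)⟩
end

section
/- The cardinality of the kernel of β divides the cardinality of the cokernel of β; in particular ω := |coker β| / |ker β| is a positive integer. -/
open Module

/-! Write `φ = F - 1`, `K = ker φ = N^F` and `R = im φ`. Then `ker β ≅ K ∩ R` and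
`coker β ≅ N / (K + R)`, and these are also the kernel and cokernel of `φ` restricted to the
finitely generated group `R`. Since `F^n = 1`, `n` kills `K ∩ R` (for `x = φ y` invariant, `F^i y = y + i x`)
and `N / (K + R)` (via the norm `∑ F^i`), so both are finite and the kernel lies in the finite
torsion subgroup `T` of `R`. On `T` the kernel and cokernel of `φ` have the same order, and
`T / φ(T)` embeds into `R / φ(R)` because `φ⁻¹(T) ⊆ T`. -/

open AddCommGroup QuotientAddGroup

theorem AddSubgroup.card_addSubgroupOf {G : Type*} [AddGroup G] (H K : AddSubgroup G) :
    Nat.card (H.addSubgroupOf K) = Nat.card ↥(H ⊓ K) := by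
  rw [← inf_addSubgroupOf_right]
  exact Nat.card_congr (addSubgroupOfEquivOfLe inf_le_right).toEquiv

theorem AddCommGroup.finite_torsion (G : Type*) [AddCommGroup G] [AddGroup.FG G] :
    Finite (torsion G) := by
  have : Module.Finite ℤ G := Module.Finite.iff_addGroup_fg.mpr ‹_›
  have : AddGroup.FG (torsion G) := Module.Finite.iff_addGroup_fg.mp
    (Module.Finite.iff_fg.mpr (IsNoetherian.noetherian (AddSubgroup.toIntSubmodule (torsion G))))
  exact finite_of_fg_isAddTorsion _ fun x => AddSubmonoid.isOfFinAddOrder_coe.mp x.2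

theorem AddCommGroup.comap_torsion_eq_of_ker_le {G H : Type*} [AddCommGroup G] [AddCommGroup H]
    {f : G →+ H} (hf : f.ker ≤ torsion G) : (torsion H).comap f = torsion G := by
  refine le_antisymm (fun x hx => ?_) (le_comap_torsion f)
  obtain ⟨m, hm, hmx⟩ := isOfFinAddOrder_iff_nsmul_eq_zero.mp hx
  refine IsOfFinAddOrder.of_nsmul (hf ?_) hm.ne'
  rwa [AddMonoidHom.mem_ker, map_nsmul]

theorem AddSubgroup.finite_quotient_of_nsmul_mem {G : Type*} [AddCommGroup G] [AddGroup.FG G]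
    {H : AddSubgroup G} {n : ℕ} (hn : 0 < n) (h : ∀ x, n • x ∈ H) : Finite (G ⧸ H) :=
  finite_of_fg_isAddTorsion _ fun q => QuotientAddGroup.induction_on q fun x =>
    isOfFinAddOrder_iff_nsmul_eq_zero.mpr ⟨n, hn, by rw [← mk_nsmul, eq_zero_iff]; exact h x⟩

namespace AddMonoidHom

variable {G : Type*} [AddCommGroup G]

theorem card_ker_eq_index_range [Finite G] (f : G →+ G) : Nat.card f.ker = f.range.index := by
  have h := f.ker.card_mul_index.trans f.range.card_mul_index.symm
  rw [AddSubgroup.index_ker, mul_comm] at h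
  exact Nat.eq_of_mul_eq_mul_left Nat.card_pos h

theorem card_ker_dvd_index_range [Finite (torsion G)] (f : G →+ G) (hf : f.ker ≤ torsion G) :
    Nat.card f.ker ∣ f.range.index := by
  let fT : torsion G →+ torsion G :=
    (f.domRestrict (torsion G)).codRestrict (torsion G) fun x => le_comap_torsion f x.2
  have hker : fT.ker = f.ker.addSubgroupOf (torsion G) :=
    (ker_codRestrict _ _ _).trans (ker_domRestrict _ _)
  have hrange : fT.range = f.range.addSubgroupOf (torsion G) := by
    ext ⟨x, hx⟩
    simp only [mem_range, AddSubgroup.mem_addSubgroupOf, Subtype.ext_iff]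
    constructor
    · rintro ⟨⟨y, -⟩, rfl⟩
      exact ⟨y, rfl⟩
    · rintro ⟨y, rfl⟩
      exact ⟨⟨y, (comap_torsion_eq_of_ker_le hf).le hx⟩, rfl⟩
  calc Nat.card f.ker = Nat.card fT.ker := by
        rw [hker, AddSubgroup.card_addSubgroupOf, inf_of_le_left hf]
    _ = f.range.relIndex (torsion G) := by rw [card_ker_eq_index_range, hrange]; rfl
    _ ∣ f.range.index := AddSubgroup.relIndex_dvd_index_of_normal _ _

variable (φ : G →+ G)

def kerToCoker : φ.ker →+ G ⧸ φ.range :=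
  (QuotientAddGroup.mk' φ.range).comp φ.ker.subtype

def restrictRange : φ.range →+ φ.range :=
  φ.rangeRestrict.comp φ.range.subtype

theorem ker_restrictRange : φ.restrictRange.ker = φ.ker.addSubgroupOf φ.range := by
  rw [restrictRange, ← comap_ker, ker_rangeRestrict]
  rfl

theorem card_ker_kerToCoker : Nat.card φ.kerToCoker.ker = Nat.card ↥(φ.ker ⊓ φ.range) := by
  rw [kerToCoker, ← comap_ker, ker_mk', inf_comm]
  exact AddSubgroup.card_addSubgroupOf _ _

theorem card_ker_restrictRange : Nat.card φ.restrictRange.ker = Nat.card ↥(φ.ker ⊓ φ.range) := by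
  rw [ker_restrictRange]
  exact AddSubgroup.card_addSubgroupOf _ _

theorem index_range_kerToCoker : φ.kerToCoker.range.index = (φ.ker ⊔ φ.range).index := by
  rw [← AddSubgroup.index_comap_of_surjective _ (mk'_surjective φ.range), kerToCoker, range_comp,
    AddSubgroup.range_subtype, AddSubgroup.comap_map_eq, ker_mk']

theorem index_range_restrictRange : φ.restrictRange.range.index = (φ.ker ⊔ φ.range).index := by
  rw [← AddSubgroup.index_comap_of_surjective _ φ.rangeRestrict_surjective, restrictRange,
    range_comp, AddSubgroup.range_subtype, AddSubgroup.comap_map_eq, ker_rangeRestrict, sup_comm]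

end AddMonoidHom

section Frobenius

variable {N : Type*} [AddCommGroup N] (F : AddAut N)

theorem frobSub_apply (x : N) : frobSub F x = F x - x := rfl

theorem nsmul_apply_eq_add_nsmul {x y : N} (hx : x ∈ invariantsOf F) (hy : frobSub F y = x)
    (i : ℕ) : (i • F) y = y + i • x := by
  have hFx : F x = x := sub_eq_zero.mp hx
  rw [frobSub_apply, sub_eq_iff_eq_add'] at hy
  induction i with
  | zero => simp
  | succ i ih =>
    rw [succ_nsmul', AddAut.add_apply, ih, map_add, map_nsmul, hy, hFx]
    module

theorem nsmul_eq_zero_of_mem_invariants_inf_range {n : ℕ} (hFn : n • F = 0) {x : N}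
    (hx : x ∈ invariantsOf F ⊓ (frobSub F).range) : n • x = 0 := by
  obtain ⟨hxF, y, hy⟩ := hx
  have h := nsmul_apply_eq_add_nsmul F hxF hy n
  rwa [hFn, AddAut.zero_apply, left_eq_add] at h

theorem nsmul_apply_sub_mem_range (i : ℕ) (x : N) : (i • F) x - x ∈ (frobSub F).range := by
  induction i with
  | zero => simp
  | succ i ih =>
    have h : ((i + 1) • F) x - x = frobSub F ((i • F) x) + ((i • F) x - x) := by
      rw [succ_nsmul', AddAut.add_apply, frobSub_apply]
      abel
    rw [h]
    exact add_mem ⟨_, rfl⟩ ih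

theorem sum_nsmul_apply_mem_invariants {n : ℕ} (hFn : n • F = 0) (x : N) :
    ∑ i ∈ Finset.range n, (i • F) x ∈ invariantsOf F := by
  change frobSub F _ = 0
  simp_rw [frobSub_apply, map_sum, ← AddAut.add_apply, ← succ_nsmul', ← Finset.sum_sub_distrib,
    Finset.sum_range_sub (fun i => (i • F) x), hFn]
  simp

theorem nsmul_mem_invariants_sup_range {n : ℕ} (hFn : n • F = 0) (x : N) :
    n • x ∈ invariantsOf F ⊔ (frobSub F).range := by
  set s := ∑ i ∈ Finset.range n, (i • F) x
  have hs : s - n • x ∈ (frobSub F).range := by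
    simpa [s, Finset.sum_sub_distrib] using
      sum_mem fun i (_ : i ∈ Finset.range n) => nsmul_apply_sub_mem_range F i x
  rw [← sub_sub_cancel s (n • x)]
  exact sub_mem (AddSubgroup.mem_sup_left (sum_nsmul_apply_mem_invariants F hFn x))
    (AddSubgroup.mem_sup_right hs)

theorem ker_restrictRange_frobSub_le_torsion {n : ℕ} (hn : 0 < n) (hFn : n • F = 0) :
    (frobSub F).restrictRange.ker ≤ torsion (frobSub F).range := by
  intro x hx
  rw [AddMonoidHom.ker_restrictRange, AddSubgroup.mem_addSubgroupOf] at hx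
  exact isOfFinAddOrder_iff_nsmul_eq_zero.mpr
    ⟨n, hn, Subtype.ext (nsmul_eq_zero_of_mem_invariants_inf_range F hFn ⟨hx, x.2⟩)⟩

end Frobenius

/-- The cardinality of the kernel of `β` divides the cardinality of its
cokernel; in particular `ω = |coker β| / |ker β|` is a positive integer. -/
theorem card_ker_beta_dvd_card_coker_beta {N : Type*} [AddCommGroup N] [AddGroup.FG N]
    (F : AddAut N) (n : ℕ) (hn : 1 ≤ n) (hFn : n • F = 0) :
    Nat.card ↥(betaHom F).ker ∣ Nat.card (betaCoker F) ∧ 0 < omegaOf F := by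
  set φ := frobSub F
  have hker : Nat.card (betaHom F).ker = Nat.card φ.restrictRange.ker :=
    φ.card_ker_kerToCoker.trans φ.card_ker_restrictRange.symm
  have hcoker : Nat.card (betaCoker F) = φ.restrictRange.range.index :=
    φ.index_range_kerToCoker.trans φ.index_range_restrictRange.symm
  have htors := ker_restrictRange_frobSub_le_torsion F hn hFn
  have := finite_torsion φ.range
  have : Finite φ.restrictRange.ker :=
    Finite.of_injective _ (AddSubgroup.inclusion_injective htors)
  have : Finite (N ⧸ (φ.ker ⊔ φ.range)) :=
    AddSubgroup.finite_quotient_of_nsmul_mem hn (nsmul_mem_invariants_sup_range F hFn)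
  have hdvd := φ.restrictRange.card_ker_dvd_index_range htors
  have hcoker_pos : 0 < φ.restrictRange.range.index := by
    rw [φ.index_range_restrictRange]
    exact Nat.pos_of_ne_zero AddSubgroup.index_ne_zero_of_finite
  rw [omegaOf, hker, hcoker]
  exact ⟨hdvd, Nat.div_pos (Nat.le_of_dvd hcoker_pos hdvd) Nat.card_pos⟩
end

section
/- If τ is odd, then ω is even and n is even. -/
open Module

/-
Since `F` has finite order and `N` is torsion free, `ker (F - 1) ∩ im (F - 1) = 0`. Hence `β` is
injective and `coker β = N / (ker (F - 1) + im (F - 1)) ≅ L / (F - 1) L` for the lattice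
`L = im (F - 1)`, which has rank `τ` and on which `F - 1` is injective; so `ω = |det (F - 1)|_L|`.
On `L ⊗ ℝ`, of odd dimension `τ`, the characteristic polynomial of `F` has a real root, so `F`
has a real eigenvalue. It is an `n`-th root of unity different from `1`, hence it is `-1`: so `n`
is even and `det (F + 1)|_L = 0`, and `det (F - 1)|_L ≡ det (F + 1)|_L` modulo `2`.
-/

open Polynomial in
theorem Polynomial.exists_isRoot_of_odd_natDegree {p : ℝ[X]} (hp : Odd p.natDegree) :
    ∃ x, p.IsRoot x := by
  wlog hlc : 0 ≤ p.leadingCoeff generalizing p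
  · obtain ⟨x, hx⟩ := this (p := -p) (by rwa [natDegree_neg])
      (by rw [leadingCoeff_neg]; linarith)
    exact ⟨x, by simpa using hx⟩
  have hdeg : 0 < p.degree := natDegree_pos_iff_degree_pos.mp hp.pos
  have hlc' : (p.comp (-X)).leadingCoeff ≤ 0 := by simp [hp.neg_one_pow, hlc]
  obtain ⟨a, ha⟩ :=
    ((p.tendsto_atTop_of_leadingCoeff_nonneg hdeg hlc).eventually_ge_atTop 0).exists
  obtain ⟨b, hb⟩ := (((p.comp (-X)).tendsto_atBot_of_leadingCoeff_nonpos
    (by rwa [degree_comp_neg_X]) hlc').eventually_le_atBot 0).exists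
  exact intermediate_value_univ₂ (a := -b) (b := a) p.continuous continuous_const
    (by simpa using hb) ha

namespace Matrix

variable {m : Type*} [Fintype m] [DecidableEq m]

theorem exists_mulVec_eq_smul_of_odd_card (A : Matrix m m ℝ) (hm : Odd (Fintype.card m)) :
    ∃ r : ℝ, ∃ v ≠ 0, A *ᵥ v = r • v := by
  obtain ⟨r, hr⟩ :=
    A.charpoly.exists_isRoot_of_odd_natDegree (by rwa [A.charpoly_natDegree_eq_dim])
  rw [Polynomial.IsRoot, eval_charpoly] at hr
  obtain ⟨v, hv, hAv⟩ := exists_mulVec_eq_zero_iff.mpr hr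
  refine ⟨r, v, hv, ?_⟩
  rwa [sub_mulVec, sub_eq_zero, scalar_apply, ← smul_one_eq_diagonal, smul_mulVec, one_mulVec,
    eq_comm] at hAv

theorem pow_mulVec_of_mulVec_eq_smul {R : Type*} [CommSemiring R] {A : Matrix m m R}
    {v : m → R} {r : R} (hAv : A *ᵥ v = r • v) (k : ℕ) : (A ^ k) *ᵥ v = r ^ k • v := by
  induction k with
  | zero => simp
  | succ k ih => rw [pow_succ', ← mulVec_mulVec, ih, mulVec_smul, hAv, smul_smul, pow_succ]

theorem det_add_one_eq_zero_and_even_of_pow_eq_one {A : Matrix m m ℝ} {n : ℕ} (hn : n ≠ 0)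
    (hA : A ^ n = 1) (hA1 : (A - 1).det ≠ 0) (hm : Odd (Fintype.card m)) :
    (A + 1).det = 0 ∧ Even n := by
  obtain ⟨r, v, hv, hAv⟩ := A.exists_mulVec_eq_smul_of_odd_card hm
  have hrn : r ^ n = 1 := by
    have h := pow_mulVec_of_mulVec_eq_smul hAv n
    rw [hA, one_mulVec] at h
    exact smul_left_injective ℝ hv (h.symm.trans (one_smul ℝ v).symm)
  rcases pow_eq_one_iff_cases.mp hrn with hn0 | rfl | ⟨rfl, heven⟩
  · exact absurd hn0 hn
  · exact absurd (exists_mulVec_eq_zero_iff.mp ⟨v, hv, by simp [sub_mulVec, hAv]⟩) hA1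
  · exact ⟨exists_mulVec_eq_zero_iff.mp ⟨v, hv, by simp [add_mulVec, hAv]⟩, heven⟩

theorem det_sub_one_modEq_det_add_one (A : Matrix m m ℤ) :
    (A - 1).det ≡ (A + 1).det [ZMOD 2] := by
  refine (ZMod.intCast_eq_intCast_iff _ _ 2).mp ?_
  simp only [← eq_intCast (Int.castRingHom (ZMod 2)), RingHom.map_det, map_sub, map_add, map_one]
  congr 1
  ext i j
  exact CharTwo.sub_eq_add _ _

theorem even_det_sub_one_and_even_of_pow_eq_one {A : Matrix m m ℤ} {n : ℕ} (hn : n ≠ 0)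
    (hA : A ^ n = 1) (hA1 : (A - 1).det ≠ 0) (hm : Odd (Fintype.card m)) :
    Even (A - 1).det ∧ Even n := by
  let f := (Int.castRingHom ℝ).mapMatrix (m := m)
  have hdet (B : Matrix m m ℤ) : (f B).det = B.det := ((Int.castRingHom ℝ).map_det B).symm
  obtain ⟨hdet1, heven⟩ := det_add_one_eq_zero_and_even_of_pow_eq_one (A := f A) hn
    (by rw [← map_pow, hA, map_one])
    (by rw [← map_one f, ← map_sub, hdet]; exact_mod_cast hA1) hm
  rw [← map_one f, ← map_add, hdet, Int.cast_eq_zero] at hdet1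
  refine ⟨even_iff_two_dvd.mpr ?_, heven⟩
  exact Int.modEq_zero_iff_dvd.mp (hdet1 ▸ A.det_sub_one_modEq_det_add_one)

end Matrix

open LinearMap

theorem LinearMap.even_det_sub_one_and_even_of_pow_eq_one {M : Type*} [AddCommGroup M]
    [Module.Free ℤ M] [Module.Finite ℤ M] {g : Module.End ℤ M} {n : ℕ} (hn : n ≠ 0)
    (hg : g ^ n = 1) (hg1 : Function.Injective ⇑(g - 1)) (hM : Odd (finrank ℤ M)) :
    Even (LinearMap.det (g - 1)) ∧ Even n := by
  classical
  replace hg1 : LinearMap.det (g - 1) ≠ 0 := fun h =>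
    det_eq_zero_iff_ker_ne_bot.mp h (ker_eq_bot.mpr hg1)
  let b := Module.Free.chooseBasis ℤ M
  have hmat : toMatrix b b (g - 1) = toMatrix b b g - 1 := by rw [map_sub, toMatrix_one]
  rw [← det_toMatrix b, hmat] at hg1 ⊢
  exact Matrix.even_det_sub_one_and_even_of_pow_eq_one hn
    (by rw [toMatrix_pow, hg, toMatrix_one]) hg1 (by rwa [← finrank_eq_card_chooseBasisIndex])

theorem LinearMap.natCard_quotient_range_eq_natAbs_det {M : Type*} [AddCommGroup M]
    [Module.Free ℤ M] [Module.Finite ℤ M] {ψ : Module.End ℤ M}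
    (hψ : Function.Injective ψ) :
    Nat.card (M ⧸ range ψ) = (LinearMap.det ψ).natAbs := by
  rw [← (range ψ).natAbs_det_equiv (LinearEquiv.ofInjective ψ hψ)]
  rfl

namespace Module.End

variable {R M : Type*} [Ring R] [AddCommGroup M] [Module R M]

def restrictRange (g : Module.End R M) : Module.End R (range g) :=
  g.restrict fun x _ => mem_range_self g x

@[simp]
theorem coe_restrictRange_apply (g : Module.End R M) (x : range g) :
    (g.restrictRange x : M) = g x :=
  rfl

theorem ker_mkQ_comp_rangeRestrict (g : Module.End R M) :
    ker ((range g.restrictRange).mkQ ∘ₗ g.rangeRestrict) = ker g ⊔ range g := by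
  ext x
  simp only [Submodule.mem_sup, mem_ker, comp_apply, Submodule.mkQ_apply,
    Submodule.Quotient.mk_eq_zero, mem_range, Subtype.ext_iff, coe_restrictRange_apply]
  constructor
  · rintro ⟨⟨_, y, rfl⟩, hy⟩
    exact ⟨x - g y, by rw [map_sub]; exact sub_eq_zero.mpr hy.symm, g y, ⟨y, rfl⟩,
      sub_add_cancel x (g y)⟩
  · rintro ⟨k, hk, _, ⟨y, rfl⟩, rfl⟩
    exact ⟨⟨g y, y, rfl⟩, show g (g y) = g (k + g y) by rw [map_add, hk, zero_add]⟩

noncomputable def quotKerSupRangeEquiv (g : Module.End R M) :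
    (M ⧸ (ker g ⊔ range g)) ≃ₗ[R] range g ⧸ range g.restrictRange :=
  (Submodule.quotEquivOfEq _ _ g.ker_mkQ_comp_rangeRestrict.symm).trans
    (quotKerEquivOfSurjective _ ((Submodule.mkQ_surjective _).comp g.surjective_rangeRestrict))

theorem apply_mem_range_sub_one {f : Module.End R M} {x : M} (hx : x ∈ range (f - 1)) :
    f x ∈ range (f - 1) := by
  obtain ⟨y, rfl⟩ := hx
  exact ⟨f y, by simp⟩

variable [IsAddTorsionFree M] {f : Module.End R M} {n : ℕ}

/-- The norm `∑ i < n, f ^ i` kills `range (f - 1)` and is multiplication by `n` on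
`ker (f - 1)`. -/
theorem disjoint_ker_range_sub_one_of_pow_eq_one (hn : n ≠ 0) (hf : f ^ n = 1) :
    Disjoint (ker (f - 1)) (range (f - 1)) := by
  rw [Submodule.disjoint_def]
  rintro _ hx ⟨y, rfl⟩
  set x := (f - 1) y
  have hfix (i : ℕ) : (f ^ i) x = x := by
    rw [pow_apply]
    exact Function.IsFixedPt.iterate (sub_eq_zero.mp hx) i
  have hsum : (∑ i ∈ Finset.range n, f ^ i) x = 0 := by
    rw [← mul_apply, geom_sum_mul, hf, sub_self, LinearMap.zero_apply]
  rw [LinearMap.sum_apply, Finset.sum_congr rfl fun i _ => hfix i, Finset.sum_const,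
    Finset.card_range, ← smul_zero n] at hsum
  exact IsAddTorsionFree.nsmul_right_injective hn hsum

theorem injective_restrictRange_sub_one_of_pow_eq_one (hn : n ≠ 0) (hf : f ^ n = 1) :
    Function.Injective (f - 1).restrictRange := by
  refine (injective_iff_map_eq_zero _).mpr fun x hx => Subtype.ext ?_
  exact Submodule.disjoint_def.mp (disjoint_ker_range_sub_one_of_pow_eq_one hn hf) _
    (congrArg Subtype.val hx) x.2

end Module.End

section Frobenius

variable {N : Type*} [AddCommGroup N] (F : AddAut N)

theorem frobSub_toIntLinearMap :
    (frobSub F).toIntLinearMap = (F.toIntLinearEquiv : Module.End ℤ N) - 1 := rfl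

theorem AddAut.toIntLinearEquiv_pow {n : ℕ} : (F.toIntLinearEquiv : Module.End ℤ N) ^ n =
    ((n • F).toIntLinearEquiv : Module.End ℤ N) := by
  induction n with
  | zero => rfl
  | succ n ih => rw [pow_succ, ih, succ_nsmul]; rfl

theorem AddAut.toIntLinearEquiv_pow_eq_one {n : ℕ} (hF : n • F = 0) :
    (F.toIntLinearEquiv : Module.End ℤ N) ^ n = 1 := by
  rw [toIntLinearEquiv_pow, hF]
  rfl

theorem betaHom_injective [IsAddTorsionFree N] {n : ℕ} (hn : n ≠ 0) (hF : n • F = 0) :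
    Function.Injective (betaHom F) := by
  refine (injective_iff_map_eq_zero _).mpr fun x hx => Subtype.ext ?_
  have hdisj := Module.End.disjoint_ker_range_sub_one_of_pow_eq_one hn
    (F.toIntLinearEquiv_pow_eq_one hF)
  exact Submodule.disjoint_def.mp hdisj _ x.2 ((QuotientAddGroup.eq_zero_iff _).mp hx)

theorem betaHom_range :
    (betaHom F).range = (invariantsOf F ⊔ (frobSub F).range).map (QuotientAddGroup.mk' _) := by
  rw [AddSubgroup.map_sup, QuotientAddGroup.map_mk'_self, sup_bot_eq, betaHom,
    AddMonoidHom.range_comp, AddSubgroup.range_subtype]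

theorem natCard_betaCoker :
    Nat.card (betaCoker F) = Nat.card (N ⧸ (invariantsOf F ⊔ (frobSub F).range)) := by
  rw [betaCoker, betaHom_range]
  exact Nat.card_congr (QuotientAddGroup.quotientQuotientEquivQuotient _ _ le_sup_right).toEquiv

theorem omegaOf_eq_natCard_quotient [IsAddTorsionFree N] {n : ℕ} (hn : n ≠ 0)
    (hF : n • F = 0) :
    omegaOf F = Nat.card (N ⧸ (ker (frobSub F).toIntLinearMap ⊔
      range (frobSub F).toIntLinearMap)) := by
  rw [omegaOf, natCard_betaCoker, (betaHom F).ker_eq_bot_iff.mpr (betaHom_injective F hn hF),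
    AddSubgroup.card_bot, Nat.div_one]
  change Nat.card (N ⧸ ((ker (frobSub F).toIntLinearMap).toAddSubgroup ⊔
    (range (frobSub F).toIntLinearMap).toAddSubgroup)) = _
  rw [← Submodule.sup_toAddSubgroup]
  rfl

theorem finrank_range_frobSub [Module.Finite ℤ N] :
    finrank ℤ (range (frobSub F).toIntLinearMap) = tauOf F := by
  rw [← (quotKerEquivRange _).finrank_eq, Submodule.finrank_quotient]
  rfl

end Frobenius

/-- If `τ` is odd, then `ω` is even and `n` (the exact order of `F`)
is even. -/
theorem omega_even_of_tau_odd {N : Type*} [AddCommGroup N]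
    [Module.Free ℤ N] [Module.Finite ℤ N]
    (F : AddAut N) (n : ℕ) (hn : 1 ≤ n) (hord : addOrderOf F = n)
    (hτ : Odd (tauOf F)) :
    Even (omegaOf F) ∧ Even n := by
  have : IsAddTorsionFree N := Module.isTorsionFree_int_iff_isAddTorsionFree.mp inferInstance
  have hn0 : n ≠ 0 := by omega
  have hF : n • F = 0 := hord ▸ addOrderOf_nsmul_eq_zero F
  set f : Module.End ℤ N := (F.toIntLinearEquiv : N →ₗ[ℤ] N)
  have hf : f ^ n = 1 := F.toIntLinearEquiv_pow_eq_one hF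
  let fL := f.restrict (p := range (f - 1)) (q := range (f - 1))
    fun _ => Module.End.apply_mem_range_sub_one
  have hfL : fL - 1 = (f - 1).restrictRange := rfl
  have hinj := Module.End.injective_restrictRange_sub_one_of_pow_eq_one hn0 hf
  have hω : omegaOf F = (LinearMap.det (fL - 1)).natAbs := by
    rw [omegaOf_eq_natCard_quotient F hn0 hF, frobSub_toIntLinearMap,
      Nat.card_congr (Module.End.quotKerSupRangeEquiv (f - 1)).toEquiv, hfL,
      natCard_quotient_range_eq_natAbs_det hinj]
  obtain ⟨hdet, heven⟩ := LinearMap.even_det_sub_one_and_even_of_pow_eq_one hn0 (g := fL)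
    (by ext x; simp [fL, Module.End.pow_restrict, hf]) (hfL ▸ hinj)
    (finrank_range_frobSub F ▸ hτ)
  exact ⟨hω ▸ Int.natAbs_even.mpr hdet, heven⟩
end

section
/- Let q ≥ 1 and g ≥ 1 be integers and let b₁, …, b_g be real numbers such that the real polynomial f(X) = ∏_{i=1}^g (X² + b_i X + q²) has integer coefficients (i.e., f is the image in ℝ[X] of a polynomial with integer coefficients). Then the polynomial h(X) = ∏_{i=1}^g (X − (2q − b_i)) also has integer coefficients. -/
open Polynomial

open Finset in
/-- Homogenized Vieta-type expansion: `∏ (A - cᵢ B) = ∑ h_k A^k B^(n-k)` where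
`h_k` are the coefficients of `∏ (X - C cᵢ)`. -/
lemma homog_expand {R S ι : Type*} [CommRing R] [CommRing S] (φ : R →+* S)
    (u : Finset ι) (c : ι → R) (A B : S) :
    ∏ i ∈ u, (A - φ (c i) * B) =
      ∑ k ∈ Finset.range (u.card + 1),
        φ ((∏ i ∈ u, (X - C (c i))).coeff k) * A ^ k * B ^ (u.card - k) := by
  classical
  induction u using Finset.induction with
  | empty => simp
  | @insert a t ha ih =>
    set n := t.card with hn
    set p : R[X] := ∏ i ∈ t, (X - C (c i)) with hp
    have hdeg : p.natDegree ≤ n := by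
      refine le_trans (natDegree_prod_le t _) ?_
      have h1 : ∑ i ∈ t, (X - C (c i)).natDegree ≤ ∑ i ∈ t, (fun _ => 1) i :=
        Finset.sum_le_sum fun i _ => natDegree_X_sub_C_le (c i)
      simpa [hn] using h1
    have hptop : p.coeff (n + 1) = 0 :=
      coeff_eq_zero_of_natDegree_lt (lt_of_le_of_lt hdeg (Nat.lt_succ_self n))
    rw [Finset.prod_insert ha, ih, Finset.prod_insert ha, Finset.card_insert_of_notMem ha]
    have hP : (X - C (c a)) * p = p * (X - C (c a)) := mul_comm _ _
    rw [hP]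
    simp only [← hn]
    conv_rhs => rw [Finset.sum_range_succ']
    have hcoeff0 : (p * (X - C (c a))).coeff 0 = -(c a * p.coeff 0) := by
      rw [mul_coeff_zero]; simp [mul_comm]
    have hcoeffs : ∀ k, (p * (X - C (c a))).coeff (k + 1)
        = p.coeff k - p.coeff (k + 1) * c a := fun k => coeff_mul_X_sub_C
    have hexp : ∀ k, n + 1 - (k + 1) = n - k := fun k => by omega
    -- rewrite the shifted sum
    have key : ∑ k ∈ Finset.range (n + 1),
        φ ((p * (X - C (c a))).coeff (k + 1)) * A ^ (k + 1) * B ^ (n + 1 - (k + 1))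
        = ∑ k ∈ Finset.range (n + 1),
          (φ (p.coeff k) - φ (p.coeff (k + 1) * c a)) * A ^ (k + 1) * B ^ (n - k) := by
      refine Finset.sum_congr rfl fun k _ => ?_
      rw [hcoeffs, hexp, map_sub]
    rw [key, hcoeff0]
    have expandL : (A - φ (c a) * B) *
        (∑ k ∈ Finset.range (n + 1), φ (p.coeff k) * A ^ k * B ^ (n - k))
        = (∑ k ∈ Finset.range (n + 1), φ (p.coeff k) * A ^ (k + 1) * B ^ (n - k))
          - (∑ k ∈ Finset.range (n + 1),
              φ (c a) * φ (p.coeff k) * A ^ k * B ^ (n - k + 1)) := by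
      rw [sub_mul, Finset.mul_sum, Finset.mul_sum]
      congr 1
      · refine Finset.sum_congr rfl fun k _ => ?_; ring
      · refine Finset.sum_congr rfl fun k _ => ?_; ring
    rw [expandL]
    -- Now handle the second sum on the left:
    have shift2 : ∑ k ∈ Finset.range (n + 1), φ (c a) * φ (p.coeff k) * A ^ k * B ^ (n - k + 1)
        = (∑ k ∈ Finset.range (n + 1),
            φ (c a * p.coeff (k + 1)) * A ^ (k + 1) * B ^ (n - k))
          + φ (c a * p.coeff 0) * B ^ (n + 1) := by
      rw [Finset.sum_range_succ' (fun k => φ (c a) * φ (p.coeff k) * A ^ k * B ^ (n - k + 1))]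
      congr 1
      · rw [Finset.sum_range_succ
          (fun k => φ (c a * p.coeff (k + 1)) * A ^ (k + 1) * B ^ (n - k))]
        rw [hptop]
        simp only [map_mul, map_zero, mul_zero, zero_mul, add_zero]
        refine Finset.sum_congr rfl fun k hk => ?_
        have hk' : k < n := Finset.mem_range.mp hk
        have : n - (k + 1) + 1 = n - k := by omega
        rw [this]
      · simp
    rw [shift2]
    have split : ∑ k ∈ Finset.range (n + 1),
        (φ (p.coeff k) - φ (p.coeff (k + 1) * c a)) * A ^ (k + 1) * B ^ (n - k)
        = (∑ k ∈ Finset.range (n + 1), φ (p.coeff k) * A ^ (k + 1) * B ^ (n - k))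
          - ∑ k ∈ Finset.range (n + 1), φ (c a * p.coeff (k + 1)) * A ^ (k + 1) * B ^ (n - k) := by
      rw [← Finset.sum_sub_distrib]
      refine Finset.sum_congr rfl fun k _ => ?_
      rw [map_mul, map_mul]
      ring
    rw [split, map_neg, pow_zero, Nat.sub_zero]
    ring

/-- If `f(X) = ∏ (X² + bᵢ X + q²)` has integer coefficients, then so does
`h(X) = ∏ (X - (2q - bᵢ))`. -/
theorem assoc_poly_int_coeffs (q g : ℕ) (hq : 1 ≤ q) (hg : 1 ≤ g) (b : Fin g → ℝ)
    (hf : ∃ F : Polynomial ℤ, F.map (Int.castRingHom ℝ) =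
      ∏ i : Fin g, (X ^ 2 + C (b i) * X + C ((q : ℝ) ^ 2))) :
    ∃ H : Polynomial ℤ, H.map (Int.castRingHom ℝ) =
      ∏ i : Fin g, (X - C (2 * (q : ℝ) - b i)) := by
  classical
  obtain ⟨F, hFf⟩ := hf
  set c : Fin g → ℝ := fun i => 2 * (q : ℝ) - b i with hc
  set h : Polynomial ℝ := ∏ i : Fin g, (X - C (c i)) with hhdef
  set rng : Subring ℝ := (Int.castRingHom ℝ).range with hrng
  -- the key homogenized identity
  have hfactor : ∀ i : Fin g, X ^ 2 + C (b i) * X + C ((q : ℝ) ^ 2)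
      = (X + C (q : ℝ)) ^ 2 - C (c i) * X := by
    intro i
    rw [hc]
    simp only [C_sub, C_mul, C_pow, map_ofNat]
    ring
  have hsum : F.map (Int.castRingHom ℝ)
      = ∑ k ∈ Finset.range (g + 1),
          C (h.coeff k) * ((X + C (q : ℝ)) ^ 2) ^ k * X ^ (g - k) := by
    rw [hFf, Finset.prod_congr rfl fun i _ => hfactor i]
    have := homog_expand (C : ℝ →+* ℝ[X]) (Finset.univ : Finset (Fin g)) c
      ((X + C (q : ℝ)) ^ 2) X
    simpa using this
  -- the auxiliary basis polynomials
  set T : ℕ → Polynomial ℝ := fun j => ((X + C (q : ℝ)) ^ 2) ^ j * X ^ (g - j) with hT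
  have hTmonic : ∀ j, (T j).Monic := fun j =>
    (((monic_X_add_C ((q : ℝ))).pow 2).pow j).mul (monic_X_pow _)
  have hTdeg : ∀ j, j ≤ g → (T j).natDegree = g + j := by
    intro j hj
    rw [hT]
    rw [(((monic_X_add_C ((q : ℝ))).pow 2).pow j).natDegree_mul (monic_X_pow _)]
    rw [natDegree_pow, natDegree_pow, natDegree_X_add_C, natDegree_X_pow]
    omega
  have hTint : ∀ j k, (T j).coeff k ∈ rng := by
    intro j k
    have : T j = (((X + C (q : ℤ)) ^ 2) ^ j * X ^ (g - j)).map (Int.castRingHom ℝ) := by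
      simp [hT, Polynomial.map_mul, Polynomial.map_pow, Polynomial.map_add]
    rw [this, coeff_map]
    exact ⟨_, rfl⟩
  -- facts about h
  have hhmonic : h.Monic := monic_prod_of_monic _ _ fun i _ => monic_X_sub_C _
  have hhdeg : h.natDegree = g := by
    rw [hhdef, natDegree_prod _ _ fun i _ => X_sub_C_ne_zero (c i)]
    simp
  -- coefficient recursion
  have hco : ∀ k, k ≤ g → h.coeff k
      = ((F.coeff (g + k) : ℤ) : ℝ)
        - ∑ j ∈ (Finset.range (g + 1)).erase k, h.coeff j * (T j).coeff (g + k) := by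
    intro k hk
    have e1 := congrArg (fun p : Polynomial ℝ => p.coeff (g + k)) hsum
    simp only [coeff_map, eq_intCast, finset_sum_coeff] at e1
    have e2 : ∀ j ∈ Finset.range (g + 1),
        (C (h.coeff j) * ((X + C (q : ℝ)) ^ 2) ^ j * X ^ (g - j)).coeff (g + k)
        = h.coeff j * (T j).coeff (g + k) := by
      intro j _
      rw [mul_assoc, coeff_C_mul, hT]
    rw [Finset.sum_congr rfl e2] at e1
    have hmem : k ∈ Finset.range (g + 1) := Finset.mem_range.mpr (by omega)
    rw [← Finset.add_sum_erase _ _ hmem] at e1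
    have hTk : (T k).coeff (g + k) = 1 := by
      have := (hTmonic k).coeff_natDegree
      rwa [hTdeg k hk] at this
    rw [hTk, mul_one] at e1
    linarith [e1]
  -- downward induction
  have key : ∀ d k, g ≤ k + d → k ≤ g → h.coeff k ∈ rng := by
    intro d
    induction d with
    | zero =>
      intro k h1 h2
      have hk : k = g := le_antisymm h2 (by omega)
      have hcg : h.coeff g = 1 := by
        rw [← hhdeg]; exact hhmonic.coeff_natDegree
      rw [hk, hcg]
      exact one_mem rng
    | succ d ih =>
      intro k h1 h2
      rw [hco k h2]
      refine sub_mem ⟨F.coeff (g + k), rfl⟩ (Subring.sum_mem _ ?_)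
      intro j hj
      obtain ⟨hjne, hjr⟩ := Finset.mem_erase.mp hj
      have hjg : j ≤ g := by have := Finset.mem_range.mp hjr; omega
      rcases lt_or_gt_of_ne hjne with hlt | hgt
      · have hz : (T j).coeff (g + k) = 0 := by
          apply coeff_eq_zero_of_natDegree_lt
          rw [hTdeg j hjg]
          omega
        rw [hz, mul_zero]
        exact zero_mem rng
      · exact mul_mem (ih j (by omega) hjg) (hTint j (g + k))
  -- conclude
  have hall : ∀ n, h.coeff n ∈ (Int.castRingHom ℝ).range := by
    intro n
    by_cases hn : n ≤ g
    · exact key g n (by omega) hn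
    · have : h.coeff n = 0 := coeff_eq_zero_of_natDegree_lt (by omega)
      rw [this]
      exact ⟨0, by simp⟩
  obtain ⟨H, hH⟩ := (Polynomial.mem_map_range (Int.castRingHom ℝ)).mpr hall
  exact ⟨H, hH⟩
end

section
/- Let q ≥ 1 and g ≥ 1 be integers and let b₁, …, b_g be real numbers with |b_i| < 2q for all i, such that the real polynomial f(X) = ∏_{i=1}^g (X² + b_i X + q²) has integer coefficients. Let h(X) = ∏_{i=1}^g (X − (2q − b_i)), which also has integer coefficients. Then f is irreducible over ℚ if and only if h is irreducible over ℚ. -/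
/-!
Let `α` be a root of one quadratic factor `X² + bX + q²` of `f`. It is not real, and
`c = 2q - b = 2q + α + q²/α` is a root of `h` lying in `ℚ(α)`. As `ℚ(c) ⊆ ℝ`, `α` has degree
exactly `2` over `ℚ(c)`, so `deg_ℚ α = 2 deg_ℚ c`. A monic polynomial is irreducible iff its
degree is that of the minimal polynomial of any of its roots, and `deg f = 2g`, `deg h = g`.
-/

open Polynomial IntermediateField

namespace Polynomial

lemma isMonicOfDegree_map_iff {R S : Type*} [Semiring R] [Semiring S] {f : R →+* S}
    (hf : Function.Injective f) {p : R[X]} {n : ℕ} :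
    IsMonicOfDegree (p.map f) n ↔ IsMonicOfDegree p n := by
  simp only [isMonicOfDegree_iff', natDegree_map_eq_of_injective hf, Monic,
    leadingCoeff_map_of_injective hf, map_eq_one_iff f hf]

lemma IsMonicOfDegree.prod {R ι : Type*} [CommSemiring R] {s : Finset ι} {f : ι → R[X]}
    {d : ι → ℕ} (h : ∀ i ∈ s, IsMonicOfDegree (f i) (d i)) :
    IsMonicOfDegree (∏ i ∈ s, f i) (∑ i ∈ s, d i) := by
  classical
  induction s using Finset.induction_on with
  | empty => simp
  | insert a s ha ih =>
    rw [Finset.prod_insert ha, Finset.sum_insert ha]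
    exact (h a (Finset.mem_insert_self a s)).mul (ih fun i hi ↦ h i (Finset.mem_insert_of_mem hi))

theorem Monic.irreducible_iff_natDegree_minpoly_eq {K L : Type*} [Field K] [Ring L] [IsDomain L]
    [Algebra K L] {p : K[X]} (hp : p.Monic) {x : L} (hx : aeval x p = 0) :
    Irreducible p ↔ (minpoly K x).natDegree = p.natDegree := by
  refine ⟨fun hirr ↦ by rw [← minpoly.eq_of_irreducible_of_monic hirr hx hp], fun hdeg ↦ ?_⟩
  have hint : IsIntegral K x := ⟨p, hp, hx⟩
  have hmin : minpoly K x = p := eq_of_monic_of_associated (minpoly.monic hint) hp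
    (associated_of_dvd_of_natDegree_le (minpoly.dvd K x hx) hp.ne_zero hdeg.ge)
  exact hmin ▸ minpoly.irreducible hint

end Polynomial

section Tower

variable {K L : Type*} [Field K] [Field L] [Algebra K L]

theorem natDegree_minpoly_eq_mul_of_mem_adjoin {x y : L} (hx : IsIntegral K x) (hy : y ∈ K⟮x⟯) :
    (minpoly K x).natDegree = (minpoly K y).natDegree * (minpoly K⟮y⟯ x).natDegree := by
  have : FiniteDimensional K K⟮x⟯ := adjoin.finiteDimensional hx
  have hy' : IsIntegral K y := (IsIntegral.of_finite K (⟨y, hy⟩ : K⟮x⟯)).map (K⟮x⟯).val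
  have hadj : K⟮y⟯⟮x⟯.restrictScalars K = K⟮x⟯ := by
    rw [adjoin_simple_adjoin_simple]
    refine le_antisymm ?_ (adjoin.mono _ _ _ (Set.subset_insert _ _))
    rw [adjoin_le_iff]
    rintro z (rfl | rfl)
    exacts [hy, mem_adjoin_simple_self K z]
  rw [← adjoin.finrank hx, ← adjoin.finrank hy', ← adjoin.finrank hx.tower_top, ← hadj]
  exact (Module.finrank_mul_finrank K K⟮y⟯ K⟮y⟯⟮x⟯).symm

theorem natDegree_minpoly_eq_two {x : L} {p : K[X]} (hp : p.natDegree = 2) (hpx : aeval x p = 0)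
    (hx : x ∉ (algebraMap K L).range) : (minpoly K x).natDegree = 2 := by
  have hp0 : p ≠ 0 := ne_zero_of_natDegree_gt (hp ▸ two_pos)
  have hint : IsIntegral K x := IsAlgebraic.isIntegral ⟨p, hp0, hpx⟩
  have := natDegree_le_of_dvd (minpoly.dvd K x hpx) hp0
  have := (minpoly.two_le_natDegree_iff hint).2 hx
  omega

end Tower

namespace Complex

theorem im_eq_zero_of_mem_adjoin_ofReal {c : ℝ} {z : ℂ} (hz : z ∈ ℚ⟮(c : ℂ)⟯) : z.im = 0 := by
  have hle : ℚ⟮(c : ℂ)⟯ ≤ ofRealAm.fieldRange.restrictScalars ℚ :=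
    adjoin_simple_le_iff.2 ⟨c, rfl⟩
  obtain ⟨r, rfl⟩ := hle hz
  exact ofReal_im r

theorem im_ne_zero_of_sq_add_mul_add_eq_zero {α : ℂ} {b n : ℝ} (hbn : b ^ 2 < 4 * n)
    (hα : α ^ 2 + b * α + n = 0) : α.im ≠ 0 := by
  intro him
  have hre : (α.re : ℂ) = α := ext rfl (by simp [him])
  rw [← hre] at hα
  have : α.re ^ 2 + b * α.re + n = 0 := by exact_mod_cast hα
  nlinarith [sq_nonneg (2 * α.re + b)]

theorem natDegree_minpoly_eq_mul_two_of_quadratic {α : ℂ} {b : ℝ} {q : ℚ} (hb : |b| < 2 * q)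
    (hα : α ^ 2 + b * α + (q : ℂ) ^ 2 = 0) (hint : IsIntegral ℚ α) :
    (minpoly ℚ α).natDegree = (minpoly ℚ ((2 * q - b : ℝ) : ℂ)).natDegree * 2 := by
  set c : ℂ := ((2 * q - b : ℝ) : ℂ) with hc_def
  have hα_im : α.im ≠ 0 := im_ne_zero_of_sq_add_mul_add_eq_zero (b := b) (n := q ^ 2)
    (by nlinarith [abs_lt.1 hb]) (by exact_mod_cast hα)
  have hα0 : α ≠ 0 := by rintro rfl; simp at hα_im
  have hc : c ∈ ℚ⟮α⟯ := by
    have : c = 2 * (q : ℂ) + α + (q : ℂ) ^ 2 * α⁻¹ := by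
      rw [hc_def]
      push_cast
      field_simp
      linear_combination -hα
    have hq : (q : ℂ) ∈ ℚ⟮α⟯ := SubfieldClass.ratCast_mem _ q
    have hα_mem := mem_adjoin_simple_self ℚ α
    rw [this]
    exact add_mem (add_mem (mul_mem (ofNat_mem _ 2) hq) hα_mem)
      (mul_mem (pow_mem hq 2) (inv_mem hα_mem))
  have hb : (b : ℂ) ∈ ℚ⟮c⟯ := by
    have : (b : ℂ) = 2 * (q : ℂ) - c := by simp [hc_def]
    rw [this]
    exact sub_mem (mul_mem (ofNat_mem _ 2) (SubfieldClass.ratCast_mem _ q))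
      (mem_adjoin_simple_self ℚ c)
  have hroot : aeval α (X ^ 2 + C ⟨b, hb⟩ * X + C (q ^ 2 : ℚ⟮c⟯)) = 0 := by
    simpa using hα
  rw [natDegree_minpoly_eq_mul_of_mem_adjoin hint hc, natDegree_minpoly_eq_two
    (isMonicOfDegree_add_add_two _ _).natDegree_eq hroot]
  rintro ⟨z, hz⟩
  exact hα_im (hz ▸ im_eq_zero_of_mem_adjoin_ofReal z.2)

end Complex

theorem assoc_poly_irreducible_iff_general (q g : ℕ) (hg : 1 ≤ g) (b : Fin g → ℝ)
    (hb : ∀ i, |b i| < 2 * (q : ℝ))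
    (F H : Polynomial ℤ)
    (hF : F.map (Int.castRingHom ℝ) =
      ∏ i : Fin g, (X ^ 2 + C (b i) * X + C ((q : ℝ) ^ 2)))
    (hH : H.map (Int.castRingHom ℝ) =
      ∏ i : Fin g, (X - C (2 * (q : ℝ) - b i))) :
    Irreducible (F.map (Int.castRingHom ℚ)) ↔ Irreducible (H.map (Int.castRingHom ℚ)) := by
  have haeval (P : ℤ[X]) (z : ℂ) :
      aeval z (P.map (Int.castRingHom ℚ)) = aeval z (P.map (Int.castRingHom ℝ)) := by
    simp only [← algebraMap_int_eq, aeval_map_algebraMap]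
  have hFq : IsMonicOfDegree (F.map (Int.castRingHom ℚ)) (g * 2) := by
    rw [isMonicOfDegree_map_iff (Int.castRingHom ℚ).injective_int,
      ← isMonicOfDegree_map_iff (Int.castRingHom ℝ).injective_int, hF]
    have := IsMonicOfDegree.prod fun i (_ : i ∈ Finset.univ) ↦
      isMonicOfDegree_add_add_two (b i) ((q : ℝ) ^ 2)
    rwa [Finset.sum_const, Finset.card_univ, Fintype.card_fin, smul_eq_mul] at this
  have hHq : IsMonicOfDegree (H.map (Int.castRingHom ℚ)) g := by
    rw [isMonicOfDegree_map_iff (Int.castRingHom ℚ).injective_int,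
      ← isMonicOfDegree_map_iff (Int.castRingHom ℝ).injective_int, hH]
    have := IsMonicOfDegree.prod fun i (_ : i ∈ Finset.univ) ↦
      isMonicOfDegree_X_sub_one (2 * (q : ℝ) - b i)
    rwa [Finset.sum_const, Finset.card_univ, Fintype.card_fin, smul_eq_mul, mul_one] at this
  let i₀ : Fin g := ⟨0, hg⟩
  obtain ⟨α, hα⟩ : ∃ α : ℂ, α ^ 2 + b i₀ * α + (q : ℂ) ^ 2 = 0 := by
    have hquad := isMonicOfDegree_add_add_two (b i₀ : ℂ) ((q : ℂ) ^ 2)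
    obtain ⟨α, hα⟩ := Complex.exists_root
      (by rw [degree_eq_natDegree hquad.ne_zero, hquad.natDegree_eq]; norm_num)
    exact ⟨α, by simpa using hα⟩
  have hFα : aeval α (F.map (Int.castRingHom ℚ)) = 0 := by
    rw [haeval, hF, map_prod]
    exact Finset.prod_eq_zero (Finset.mem_univ i₀) (by simpa using hα)
  have hHc : aeval ((2 * (q : ℚ) - b i₀ : ℝ) : ℂ) (H.map (Int.castRingHom ℚ)) = 0 := by
    rw [haeval, hH, map_prod]
    exact Finset.prod_eq_zero (Finset.mem_univ i₀) (by simp)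
  rw [hFq.monic.irreducible_iff_natDegree_minpoly_eq hFα,
    hHq.monic.irreducible_iff_natDegree_minpoly_eq hHc, hFq.natDegree_eq, hHq.natDegree_eq,
    Complex.natDegree_minpoly_eq_mul_two_of_quadratic (q := q) (by exact_mod_cast hb i₀)
      (by exact_mod_cast hα) ⟨_, hFq.monic, hFα⟩]
  omega

/-- With `|bᵢ| < 2q`, `f = ∏ (X² + bᵢ X + q²)` is irreducible over `ℚ`
if and only if `h = ∏ (X - (2q - bᵢ))` is irreducible over `ℚ`. -/
theorem assoc_poly_irreducible_iff (q g : ℕ) (hq : 1 ≤ q) (hg : 1 ≤ g) (b : Fin g → ℝ)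
    (hb : ∀ i, |b i| < 2 * (q : ℝ))
    (F H : Polynomial ℤ)
    (hF : F.map (Int.castRingHom ℝ) =
      ∏ i : Fin g, (X ^ 2 + C (b i) * X + C ((q : ℝ) ^ 2)))
    (hH : H.map (Int.castRingHom ℝ) =
      ∏ i : Fin g, (X - C (2 * (q : ℝ) - b i))) :
    Irreducible (F.map (Int.castRingHom ℚ)) ↔ Irreducible (H.map (Int.castRingHom ℚ)) :=
  assoc_poly_irreducible_iff_general q g hg b hb F H hF hH
end

section
/- Let f ∈ ℤ[X] be monic of degree 2g (g ≥ 1), all of whose roots in ℂ have absolute value q, and write a₁ for the coefficient of X^{2g−1} in f. If a₁ > g(2q − 1), then f(−q) = 0. -/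
/-!
If `α₁, …, α_{2g}` are the complex roots of `f`, then `|q + αᵢ|² = q (2q + 2 Re αᵢ)`, so
`f(-q)² = q^{2g} P` with `P = ∏ (2q + 2 Re αᵢ)`. The factors of `P` are nonnegative and by Vieta
they sum to `4gq - 2a₁ < 2g`, so AM-GM gives `P < 1`. On the other hand `2 Re αᵢ = αᵢ + ᾱᵢ` is an
algebraic integer, so `P = f(-q)² / q^{2g}` is a rational algebraic integer, hence an integer,
hence `0`.
-/

open Polynomial

theorem Real.prod_le_sum_div_card_pow {ι : Type*} (s : Finset ι) {z : ι → ℝ}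
    (hz : ∀ i ∈ s, 0 ≤ z i) : ∏ i ∈ s, z i ≤ ((∑ i ∈ s, z i) / s.card) ^ s.card := by
  rcases s.eq_empty_or_nonempty with rfl | hs
  · simp
  have hcard : (0 : ℝ) < s.card := by exact_mod_cast hs.card_pos
  have key := Real.geom_mean_le_arith_mean s (fun _ => 1) z (fun _ _ => zero_le_one)
    (by simpa using hcard) hz
  simp only [Real.rpow_one, Finset.sum_const, nsmul_eq_mul, mul_one, one_mul] at key
  calc ∏ i ∈ s, z i = ((∏ i ∈ s, z i) ^ (s.card : ℝ)⁻¹) ^ s.card := by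
        rw [← Real.rpow_natCast, ← Real.rpow_mul (Finset.prod_nonneg hz),
          inv_mul_cancel₀ hcard.ne', Real.rpow_one]
    _ ≤ _ := by gcongr; exact Real.rpow_nonneg (Finset.prod_nonneg hz) _

theorem Real.multiset_prod_le_sum_div_card_pow {s : Multiset ℝ} (hs : ∀ x ∈ s, 0 ≤ x) :
    s.prod ≤ (s.sum / Multiset.card s) ^ Multiset.card s := by
  rw [Multiset.prod_eq_prod_coe, Multiset.sum_eq_sum_coe, ← Multiset.card_coe]
  exact Real.prod_le_sum_div_card_pow _ fun _ _ => hs _ Multiset.coe_mem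

theorem Real.multiset_prod_lt_one_of_sum_lt_card {s : Multiset ℝ} (hs : ∀ x ∈ s, 0 ≤ x)
    (hsum : s.sum < Multiset.card s) : s.prod < 1 := by
  have hcard : (0 : ℝ) < Multiset.card s := (Multiset.sum_nonneg hs).trans_lt hsum
  refine (Real.multiset_prod_le_sum_div_card_pow hs).trans_lt (pow_lt_one₀ ?_ ?_ ?_)
  · exact div_nonneg (Multiset.sum_nonneg hs) hcard.le
  · rwa [div_lt_one hcard]
  · exact_mod_cast hcard.ne'

theorem Complex.normSq_ofReal_add_of_norm_eq {r : ℝ} {z : ℂ} (hz : ‖z‖ = r) :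
    normSq (r + z) = r * (2 * r + 2 * z.re) := by
  have h := Complex.normSq_eq_norm_sq z
  rw [hz, normSq_apply] at h
  simp only [normSq_apply, add_re, ofReal_re, add_im, ofReal_im, zero_add]
  linear_combination h

theorem Complex.isIntegral_ofReal_two_mul_re {α : ℂ} (hα : IsIntegral ℤ α) :
    IsIntegral ℤ ((2 * α.re : ℝ) : ℂ) := by
  rw [← Complex.add_conj]
  exact hα.add (hα.map (starRingEnd ℂ).toIntAlgHom)

namespace Polynomial

variable {F : ℂ[X]} (r : ℝ)

theorem normSq_eval_neg_eq_pow_mul_prod (hF : F.Monic) (hroots : ∀ α ∈ F.roots, ‖α‖ = r) :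
    Complex.normSq (F.eval (-r)) =
      r ^ F.natDegree * (F.roots.map fun α => 2 * r + 2 * α.re).prod := by
  rw [(IsAlgClosed.splits F).eval_eq_prod_roots_of_monic hF, map_multiset_prod, Multiset.map_map,
    Multiset.map_congr rfl (g := fun α => r * (2 * r + 2 * α.re)) fun α hα => ?_,
    Multiset.prod_map_mul, Multiset.map_const', Multiset.prod_replicate,
    IsAlgClosed.card_roots_eq_natDegree]
  rw [Function.comp_apply, ← neg_add', Complex.normSq_neg,
    Complex.normSq_ofReal_add_of_norm_eq (hroots α hα)]

theorem sum_roots_map_two_mul_add_re (hF : F.Monic) :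
    (F.roots.map fun α => 2 * r + 2 * α.re).sum = 2 * r * F.natDegree - 2 * F.nextCoeff.re := by
  rw [(IsAlgClosed.splits F).nextCoeff_eq_neg_sum_roots_of_monic hF, Multiset.sum_map_add,
    Multiset.sum_map_mul_left, Multiset.map_const', Multiset.sum_replicate,
    IsAlgClosed.card_roots_eq_natDegree, Complex.neg_re,
    ← Complex.coe_reAddGroupHom, map_multiset_sum, Multiset.sum_map_mul_left]
  simp only [nsmul_eq_mul, Complex.coe_reAddGroupHom]
  ring

theorem sq_eval_neg_eq_pow_mul_prod_aroots {f : ℤ[X]} (hf : f.Monic) (m : ℕ)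
    (hroots : ∀ α ∈ f.aroots ℂ, ‖α‖ = m) :
    ((f.eval (-(m : ℤ)) : ℤ) : ℝ) ^ 2 =
      m ^ f.natDegree * ((f.aroots ℂ).map fun α => 2 * (m : ℝ) + 2 * α.re).prod := by
  have hcast : -((m : ℝ) : ℂ) = ((-(m : ℤ) : ℤ) : ℂ) := by push_cast; rfl
  rw [← hf.natDegree_map (algebraMap ℤ ℂ), aroots_def,
    ← normSq_eval_neg_eq_pow_mul_prod m (hf.map _) hroots, hcast, eval_intCast_map, eq_intCast,
    Complex.normSq_intCast, sq, Int.cast_id]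

theorem isIntegral_prod_aroots_two_mul_add_re {f : ℤ[X]} (hf : f.Monic) (m : ℕ) :
    IsIntegral ℤ (((f.aroots ℂ).map fun α => 2 * (m : ℝ) + 2 * α.re).prod : ℂ) := by
  rw [← Complex.ofRealHom_eq_coe, map_multiset_prod, Multiset.map_map]
  refine IsIntegral.multiset_prod fun _ hx => ?_
  obtain ⟨α, hα, rfl⟩ := Multiset.mem_map.mp hx
  have hα_int : IsIntegral ℤ α := ⟨f, hf, by rw [← aeval_def]; exact (mem_aroots.mp hα).2⟩
  simpa using (isIntegral_algebraMap (R := ℤ) (A := ℂ) (x := 2 * m)).add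
    (Complex.isIntegral_ofReal_two_mul_re hα_int)

end Polynomial

theorem Int.eq_zero_of_sq_eq_pow_mul_of_isIntegral {E : ℤ} {q N : ℕ} (hN : N ≠ 0) {P : ℝ}
    (hE : (E : ℝ) ^ 2 = q ^ N * P) (hP : IsIntegral ℤ (P : ℂ)) (hP1 : P < 1) : E = 0 := by
  rcases q.eq_zero_or_pos with rfl | hq
  · simpa [hN] using hE
  have hqN : (0 : ℝ) < q ^ N := by positivity
  have hrP : ((E ^ 2 / q ^ N : ℚ) : ℝ) = P := by
    push_cast
    rw [hE, mul_div_cancel_left₀ _ hqN.ne']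
  obtain ⟨n, hn⟩ : ∃ n : ℤ, (n : ℚ) = E ^ 2 / q ^ N := by
    refine IsIntegrallyClosed.isIntegral_iff.mp ?_
    rw [← isIntegral_algebraMap_iff (A := ℚ) (B := ℂ) (algebraMap ℚ ℂ).injective]
    simpa [← hrP] using hP
  have hnP : (n : ℝ) = P := by rw [← hrP, ← hn]; norm_cast
  have hn0 : n = 0 := by
    have h0 : 0 ≤ n := by
      exact_mod_cast hnP ▸ nonneg_of_mul_nonneg_right (hE ▸ sq_nonneg _) hqN
    have h1 : n < 1 := by exact_mod_cast hnP ▸ hP1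
    omega
  rw [← hnP, hn0, Int.cast_zero, mul_zero] at hE
  exact_mod_cast pow_eq_zero_iff two_ne_zero |>.mp hE

theorem weil_poly_large_a1_root_neg_q_general (q : ℕ) (g : ℕ) (hg : 1 ≤ g)
    (f : Polynomial ℤ) (hmonic : f.Monic) (hdeg : f.natDegree = 2 * g)
    (habs : ∀ z : ℂ, Polynomial.aeval z f = 0 → ‖z‖ = q)
    (ha : (g : ℤ) * (2 * q - 1) < f.coeff (2 * g - 1)) :
    f.eval (-(q : ℤ)) = 0 := by
  have hnorm : ∀ α ∈ f.aroots ℂ, ‖α‖ = q := fun α hα => habs α (mem_aroots.mp hα).2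
  set xs := (f.aroots ℂ).map fun α => 2 * (q : ℝ) + 2 * α.re
  have hsq := sq_eval_neg_eq_pow_mul_prod_aroots hmonic q hnorm
  rw [hdeg] at hsq
  have hnonneg : ∀ x ∈ xs, 0 ≤ x := by
    simp only [xs, Multiset.mem_map]
    rintro _ ⟨α, hα, rfl⟩
    linarith [neg_le_of_abs_le ((Complex.abs_re_le_norm α).trans_eq (hnorm α hα))]
  have hsum : xs.sum < Multiset.card xs := by
    have ha' : (g : ℝ) * (2 * q - 1) + 1 ≤ f.coeff (2 * g - 1) := by exact_mod_cast ha
    simp only [xs, aroots_def]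
    rw [sum_roots_map_two_mul_add_re q (hmonic.map _), Multiset.card_map,
      IsAlgClosed.card_roots_eq_natDegree, hmonic.natDegree_map, hdeg, nextCoeff_map (RingHom.injective_int _),
      nextCoeff_of_natDegree_pos (by omega), hdeg, eq_intCast, Complex.intCast_re]
    push_cast
    linarith
  exact Int.eq_zero_of_sq_eq_pow_mul_of_isIntegral (N := 2 * g) (by omega) hsq
    (isIntegral_prod_aroots_two_mul_add_re hmonic q)
    (Real.multiset_prod_lt_one_of_sum_lt_card hnonneg hsum)

/-- If `f ∈ ℤ[X]` is monic of degree `2g`, all complex roots of `f` have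
absolute value `q`, and the coefficient `a₁` of `X^(2g-1)` satisfies `a₁ > g(2q - 1)`,
then `f(-q) = 0`. -/
theorem weil_poly_large_a1_root_neg_q (q : ℕ) (hq : IsPrimePow q) (g : ℕ) (hg : 1 ≤ g)
    (f : Polynomial ℤ) (hmonic : f.Monic) (hdeg : f.natDegree = 2 * g)
    (habs : ∀ z : ℂ, Polynomial.aeval z f = 0 → ‖z‖ = q)
    (ha : (g : ℤ) * (2 * q - 1) < f.coeff (2 * g - 1)) :
    f.eval (-(q : ℤ)) = 0 :=
  weil_poly_large_a1_root_neg_q_general q g hg f hmonic hdeg habs ha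
end

section
/- For every prime power q and integer g ≥ 1, the polynomial f(X) = (X² + (2q−1)X + q²)^g is monic of degree 2g with integer coefficients, all of its complex roots have absolute value q, the coefficient of X^{2g−1} in f equals g(2q − 1), and f(−q) = q^g ≠ 0. -/
/-!
The roots of `X² + (2q - 1)X + q²` are non-real because its discriminant `1 - 4q` is negative,
so they are complex conjugates whose product is `q²`. The coefficient `a₁` of a power of a
monic polynomial is additive in the exponent, and `f(-q) = (q² - (2q - 1)q + q²)^g = q^g`.
-/

open Polynomial

theorem Complex.normSq_eq_of_sq_add_mul_add_eq_zero {b c : ℝ} (hdisc : b ^ 2 < 4 * c) {z : ℂ}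
    (hz : z ^ 2 + b * z + c = 0) : Complex.normSq z = c := by
  have hre : z.re ^ 2 - z.im ^ 2 + b * z.re + c = 0 := by
    simpa [sq] using congrArg Complex.re hz
  have him : z.im * (2 * z.re + b) = 0 := by
    have h := congrArg Complex.im hz
    simp only [sq, Complex.add_im, Complex.mul_im, Complex.ofReal_re, Complex.ofReal_im,
      Complex.zero_im] at h
    linear_combination h
  have hx : 2 * z.re + b = 0 := by
    refine (mul_eq_zero.mp him).resolve_left fun hy => ?_
    rw [hy] at hre
    nlinarith [sq_nonneg (2 * z.re + b)]
  rw [Complex.normSq_apply]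
  linear_combination z.re * hx - hre

section Quadratic

variable {R : Type*} [CommRing R] (b c : R)

theorem monic_X_sq_add_C_mul_X_add_C : (X ^ 2 + C b * X + C c).Monic := by
  rw [add_assoc]
  exact monic_X_pow_add (degree_linear_le.trans_lt (by norm_num))

variable [Nontrivial R]

theorem natDegree_X_sq_add_C_mul_X_add_C : (X ^ 2 + C b * X + C c).natDegree = 2 := by
  compute_degree!

theorem natDegree_X_sq_add_C_mul_X_add_C_pow (g : ℕ) :
    ((X ^ 2 + C b * X + C c) ^ g).natDegree = 2 * g := by
  rw [(monic_X_sq_add_C_mul_X_add_C b c).natDegree_pow, natDegree_X_sq_add_C_mul_X_add_C,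
    mul_comm]

theorem coeff_X_sq_add_C_mul_X_add_C_pow_two_mul_sub_one {g : ℕ} (hg : 1 ≤ g) :
    ((X ^ 2 + C b * X + C c) ^ g).coeff (2 * g - 1) = g * b := by
  have hp := monic_X_sq_add_C_mul_X_add_C b c
  have hnext : (X ^ 2 + C b * X + C c).nextCoeff = b := by
    rw [nextCoeff_of_natDegree_pos (by rw [natDegree_X_sq_add_C_mul_X_add_C]; norm_num),
      natDegree_X_sq_add_C_mul_X_add_C]
    simp
  rw [← natDegree_X_sq_add_C_mul_X_add_C_pow b c g,
    ← nextCoeff_of_natDegree_pos (by rw [natDegree_X_sq_add_C_mul_X_add_C_pow]; omega),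
    hp.nextCoeff_pow, hnext, nsmul_eq_mul]

end Quadratic

theorem norm_sq_eq_of_aeval_X_sq_add_C_mul_X_add_C_pow_eq_zero {b c : ℤ} (hdisc : b ^ 2 < 4 * c)
    {g : ℕ} {z : ℂ} (hz : aeval z ((X ^ 2 + C b * X + C c) ^ g) = 0) : ‖z‖ ^ 2 = c := by
  have hroot : z ^ 2 + (b : ℝ) * z + (c : ℝ) = 0 := by
    simpa using (pow_eq_zero_iff'.mp (by simpa using hz)).1
  rw [Complex.sq_norm]
  exact Complex.normSq_eq_of_sq_add_mul_add_eq_zero (by exact_mod_cast hdisc) hroot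

/-- The polynomial `f = (X² + (2q-1)X + q²)^g` is a monic Weil-q²-polynomial
of degree `2g` with `a₁ = g(2q - 1)` and `f(-q) = q^g ≠ 0`; so the bound of the previous
statement is sharp. -/
theorem weil_poly_a1_bound_sharp (q : ℕ) (hq : IsPrimePow q) (g : ℕ) (hg : 1 ≤ g)
    (f : Polynomial ℤ)
    (hf : f = (X ^ 2 + C (2 * (q : ℤ) - 1) * X + C ((q : ℤ) ^ 2)) ^ g) :
    f.Monic ∧ f.natDegree = 2 * g ∧
    (∀ z : ℂ, Polynomial.aeval z f = 0 → ‖z‖ = q) ∧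
    f.coeff (2 * g - 1) = (g : ℤ) * (2 * q - 1) ∧
    f.eval (-(q : ℤ)) = (q : ℤ) ^ g ∧ (q : ℤ) ^ g ≠ 0 := by
  subst hf
  have hq1 : (1 : ℤ) ≤ q := by exact_mod_cast hq.one_lt.le
  refine ⟨(monic_X_sq_add_C_mul_X_add_C _ _).pow g, natDegree_X_sq_add_C_mul_X_add_C_pow _ _ g,
    fun z hz => ?_, coeff_X_sq_add_C_mul_X_add_C_pow_two_mul_sub_one _ _ hg, ?_, by positivity⟩
  · have hnorm := norm_sq_eq_of_aeval_X_sq_add_C_mul_X_add_C_pow_eq_zero (by nlinarith) hz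
    push_cast at hnorm
    exact (pow_left_inj₀ (norm_nonneg z) q.cast_nonneg two_ne_zero).mp hnorm
  · simp only [eval_pow, eval_add, eval_mul, eval_C, eval_X]
    ring
end

section
/- Let f ∈ ℤ[X] be monic of degree 2g (g ≥ 1), all of whose roots in ℂ have absolute value q, and assume f has no real roots. Then 0 < f(q) ≤ q^g · (4q − 1)^g. Equivalently, writing f(X) = ∏_{i=1}^{2g}(X − α_i) over ℂ, one has ∏_{i=1}^{2g}(1 − α_i/q) ≤ (4 − 1/q)^g. -/
/-!
Let `z` run over the complex roots of `f`, so `|z| = q`, and put `s_z = |q + z|²`. By the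
parallelogram law `|q - z|² = 4q² - s_z`, hence `f(q)² = ∏ (4q² - s_z)` and `f(-q)² = ∏ s_z`.
Pairing each root with its conjugate, `f(-q)² = q^(2g) ∏ (2q + z + z̄)`, and the last product is a
rational algebraic integer, hence an integer; as `f(-q) ≠ 0` this gives `∏ s_z ≥ q^(2g)`. The mean
of the `s_z` is therefore at least `q` by AM-GM, so the mean of the `4q² - s_z` is at most `4q² - q`,
and AM-GM once more gives `f(q)² ≤ (4q² - q)^(2g)`. Finally `f(q) > 0` because a monic real
polynomial without real roots is positive everywhere.
-/

open Polynomial Complex ComplexConjugate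

namespace Real

theorem prod_le_mean_pow {ι : Type*} (s : Finset ι) (t : ι → ℝ) (ht : ∀ i ∈ s, 0 ≤ t i) :
    ∏ i ∈ s, t i ≤ ((∑ i ∈ s, t i) / s.card) ^ s.card := by
  rcases s.eq_empty_or_nonempty with rfl | hs
  · simp
  have hcard : (0 : ℝ) < s.card := by exact_mod_cast hs.card_pos
  have h := geom_mean_le_arith_mean s (fun _ => 1) t (fun _ _ => zero_le_one)
    (by simpa using hcard) ht
  simp only [rpow_one, one_mul, Finset.sum_const, nsmul_eq_mul, mul_one] at h
  calc ∏ i ∈ s, t i = ((∏ i ∈ s, t i) ^ (s.card : ℝ)⁻¹) ^ s.card := by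
        rw [← rpow_natCast, ← rpow_mul (Finset.prod_nonneg ht), inv_mul_cancel₀ hcard.ne',
          rpow_one]
    _ ≤ _ := pow_le_pow_left₀ (rpow_nonneg (Finset.prod_nonneg ht) _) h _

theorem prod_sub_le_sub_pow {ι : Type*} (s : Finset ι) (t : ι → ℝ) {C r : ℝ}
    (ht0 : ∀ i ∈ s, 0 ≤ t i) (htC : ∀ i ∈ s, t i ≤ C) (hprod : r ^ s.card ≤ ∏ i ∈ s, t i) :
    ∏ i ∈ s, (C - t i) ≤ (C - r) ^ s.card := by
  rcases s.eq_empty_or_nonempty with rfl | hs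
  · simp
  have hcard : (0 : ℝ) < s.card := by exact_mod_cast hs.card_pos
  set m := (∑ i ∈ s, t i) / s.card
  have hrm : r ≤ m := le_of_pow_le_pow_left₀ hs.card_pos.ne'
    (div_nonneg (Finset.sum_nonneg ht0) hcard.le) (hprod.trans (prod_le_mean_pow s t ht0))
  have hmean : (∑ i ∈ s, (C - t i)) / s.card = C - m := by
    rw [Finset.sum_sub_distrib, Finset.sum_const, nsmul_eq_mul, sub_div,
      mul_div_cancel_left₀ _ hcard.ne']
  have hCt : ∀ i ∈ s, 0 ≤ C - t i := fun i hi => sub_nonneg.2 (htC i hi)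
  calc ∏ i ∈ s, (C - t i) ≤ (C - m) ^ s.card := hmean ▸ prod_le_mean_pow s _ hCt
    _ ≤ (C - r) ^ s.card := by
        refine pow_le_pow_left₀ ?_ (by linarith) _
        exact hmean ▸ div_nonneg (Finset.sum_nonneg hCt) hcard.le

end Real

theorem Multiset.prod_map_sub_le_sub_pow (m : Multiset ℝ) {C r : ℝ}
    (h0 : ∀ x ∈ m, 0 ≤ x) (hC : ∀ x ∈ m, x ≤ C) (hprod : r ^ card m ≤ m.prod) :
    (m.map (C - ·)).prod ≤ (C - r) ^ card m := by
  have hcard : card m = (Finset.univ : Finset m).card := by simp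
  rw [m.prod_eq_prod_coe, hcard] at hprod
  rw [← Multiset.map_univ, ← Finset.prod_eq_multiset_prod, hcard]
  exact Real.prod_sub_le_sub_pow _ _ (fun x _ => h0 x Multiset.coe_mem)
    (fun x _ => hC x Multiset.coe_mem) hprod

theorem Int.dvd_of_cast_eq_mul_isIntegral {K : Type*} [Field K] [CharZero K] {a b : ℤ} {x : K}
    (ha : a ≠ 0) (hx : IsIntegral ℤ x) (h : (b : K) = a * x) : a ∣ b := by
  have hxq : x = algebraMap ℚ K (b / a) := by
    rw [map_div₀, map_intCast, map_intCast, h]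
    field_simp
  rw [hxq, isIntegral_algebraMap_iff (algebraMap ℚ K).injective] at hx
  obtain ⟨m, hm⟩ := IsIntegrallyClosed.isIntegral_iff.mp hx
  refine ⟨m, ?_⟩
  rw [eq_intCast, eq_div_iff (by exact_mod_cast ha)] at hm
  exact_mod_cast (by linarith : (b : ℚ) = a * m)

theorem Polynomial.Monic.eval_pos_of_forall_eval_ne_zero {f : ℝ[X]} (hf : f.Monic)
    (hroots : ∀ x, f.eval x ≠ 0) (x : ℝ) : 0 < f.eval x := by
  rcases Nat.eq_zero_or_pos f.natDegree with h0 | hdeg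
  · simp [hf.natDegree_eq_zero.1 h0]
  obtain ⟨y, hy, hxy⟩ := ((tendsto_atTop_of_leadingCoeff_nonneg f
    (natDegree_pos_iff_degree_pos.1 hdeg) (by simp [hf.leadingCoeff])).eventually_gt_atTop 0
    |>.and (Filter.eventually_ge_atTop x)).exists
  by_contra! hx
  obtain ⟨c, -, hc⟩ := intermediate_value_Icc hxy f.continuous.continuousOn ⟨hx, hy.le⟩
  exact hroots c hc

namespace Complex

variable {z : ℂ} {r : ℝ}

theorem normSq_sub_eq_of_norm_eq (hz : ‖z‖ = r) :
    normSq (r - z) = 4 * r ^ 2 - normSq (r + z) := by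
  have h : normSq z = r ^ 2 := by rw [← Complex.sq_norm, hz]
  simp only [normSq_apply, sub_re, sub_im, add_re, add_im, ofReal_re, ofReal_im] at h ⊢
  linear_combination 2 * h

theorem normSq_add_le_of_norm_eq (hz : ‖z‖ = r) : normSq (r + z) ≤ 4 * r ^ 2 := by
  linarith [normSq_nonneg (r - z), normSq_sub_eq_of_norm_eq hz]

theorem neg_sub_mul_neg_sub_conj (hz : ‖z‖ = r) :
    (-r - z) * (-r - conj z) = r * (2 * r + z + conj z) := by
  have hzz : z * conj z = (r : ℂ) ^ 2 := by
    rw [mul_conj, normSq_eq_norm_sq, hz]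
    push_cast
    ring
  linear_combination hzz

end Complex

namespace Polynomial.Monic

variable {f : ℤ[X]}

theorem intCast_eval_eq_prod_aroots (hf : f.Monic) (c : ℤ) :
    ((f.eval c : ℤ) : ℂ) = ((f.aroots ℂ).map ((c : ℂ) - ·)).prod := by
  rw [← (IsAlgClosed.splits _).aeval_eq_prod_aroots_of_monic hf]
  simpa using (aeval_algebraMap_apply_eq_algebraMap_eval (A := ℂ) c f).symm

theorem sq_eval_eq_prod_normSq (hf : f.Monic) (c : ℤ) :
    ((f.eval c : ℤ) : ℝ) ^ 2 = ((f.aroots ℂ).map fun z => normSq (c - z)).prod := by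
  have h := congrArg normSq (hf.intCast_eval_eq_prod_aroots c)
  rw [normSq_intCast, map_multiset_prod, Multiset.map_map] at h
  rw [sq, h, Function.comp_def]

variable {q : ℕ}

theorem sq_eval_eq_prod_four_mul_sq_sub (hf : f.Monic) (habs : ∀ z ∈ f.aroots ℂ, ‖z‖ = q) :
    ((f.eval q : ℤ) : ℝ) ^ 2 =
      ((f.aroots ℂ).map fun z => 4 * (q : ℝ) ^ 2 - normSq (q + z)).prod := by
  rw [hf.sq_eval_eq_prod_normSq]
  refine congrArg _ (Multiset.map_congr rfl fun z hz => ?_)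
  exact_mod_cast normSq_sub_eq_of_norm_eq (habs z hz)

theorem pow_natDegree_dvd_sq_eval_neg (hf : f.Monic) (hq : 0 < q)
    (habs : ∀ z ∈ f.aroots ℂ, ‖z‖ = q) : (q : ℤ) ^ f.natDegree ∣ f.eval (-q : ℤ) ^ 2 := by
  have hB := hf.intCast_eval_eq_prod_aroots (-q)
  push_cast at hB
  have hBN : ((f.eval (-q : ℤ) ^ 2 : ℤ) : ℂ) =
      ((q ^ f.natDegree : ℤ) : ℂ) * ((f.aroots ℂ).map fun z => 2 * (q : ℂ) + z + conj z).prod := by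
    calc ((f.eval (-q : ℤ) ^ 2 : ℤ) : ℂ)
        = ((f.eval (-q : ℤ) : ℤ) : ℂ) * conj ((f.eval (-q : ℤ) : ℤ) : ℂ) := by
          rw [map_intCast, Int.cast_pow, sq]
      _ = ((f.aroots ℂ).map fun z => (-(q : ℂ) - z) * (-q - conj z)).prod := by
          rw [hB, map_multiset_prod, Multiset.map_map, ← Multiset.prod_map_mul]
          simp only [Function.comp_def, map_sub, map_neg, map_natCast]
      _ = ((f.aroots ℂ).map fun z => (q : ℂ) * (2 * q + z + conj z)).prod := by
          refine congrArg _ (Multiset.map_congr rfl fun z hz => ?_)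
          exact_mod_cast neg_sub_mul_neg_sub_conj (habs z hz)
      _ = _ := by
          rw [Multiset.prod_map_mul, Multiset.map_const', Multiset.prod_replicate,
            IsAlgClosed.card_aroots_eq_natDegree]
          push_cast
          rfl
  refine Int.dvd_of_cast_eq_mul_isIntegral (by positivity)
    (IsIntegral.multiset_prod fun x hx => ?_) hBN
  obtain ⟨z, hz, rfl⟩ := Multiset.mem_map.1 hx
  have hzi : IsIntegral ℤ z := ⟨f, hf, (mem_aroots.1 hz).2⟩
  simpa using ((isIntegral_algebraMap (x := 2 * (q : ℤ))).add hzi).add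
    (hzi.map (starRingEnd ℂ).toIntAlgHom)

theorem pow_natDegree_le_prod_normSq_add (hf : f.Monic) (hq : 0 < q)
    (habs : ∀ z ∈ f.aroots ℂ, ‖z‖ = q) (hne : f.eval (-q : ℤ) ≠ 0) :
    (q : ℝ) ^ f.natDegree ≤ ((f.aroots ℂ).map fun z => normSq (q + z)).prod := by
  have hle : ((q : ℤ) ^ f.natDegree : ℝ) ≤ ((f.eval (-q : ℤ) : ℤ) : ℝ) ^ 2 := by
    exact_mod_cast Int.le_of_dvd (pow_two_pos_of_ne_zero hne) (hf.pow_natDegree_dvd_sq_eval_neg hq habs)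
  rw [hf.sq_eval_eq_prod_normSq] at hle
  simpa [← normSq_neg (-(q : ℂ) - _), add_comm] using hle

end Polynomial.Monic

theorem weil_poly_l_value_bound_general (q : ℕ) (hq : IsPrimePow q) (g : ℕ)
    (f : Polynomial ℤ) (hmonic : f.Monic) (hdeg : f.natDegree = 2 * g)
    (habs : ∀ z : ℂ, Polynomial.aeval z f = 0 → ‖z‖ = q)
    (hreal : ∀ x : ℝ, Polynomial.aeval x f ≠ 0) :
    0 < f.eval (q : ℤ) ∧ f.eval (q : ℤ) ≤ (q : ℤ) ^ g * (4 * q - 1) ^ g := by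
  have habs' : ∀ z ∈ f.aroots ℂ, ‖z‖ = q := fun z hz => habs z (mem_aroots.1 hz).2
  have hpos (c : ℤ) : 0 < f.eval c := by
    simpa using (hmonic.map (algebraMap ℤ ℝ)).eval_pos_of_forall_eval_ne_zero
      (fun x => by rw [eval_map_algebraMap]; exact hreal x) c
  refine ⟨hpos q, ?_⟩
  set S := (f.aroots ℂ).map fun z => normSq (q + z)
  have hcard : Multiset.card S = 2 * g := by
    simp [S, IsAlgClosed.card_aroots_eq_natDegree, hdeg]
  have hamgm := S.prod_map_sub_le_sub_pow (C := 4 * (q : ℝ) ^ 2) (r := q)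
    (Multiset.forall_mem_map_iff.2 fun z _ => normSq_nonneg _)
    (Multiset.forall_mem_map_iff.2 fun z hz => mod_cast normSq_add_le_of_norm_eq (habs' z hz))
    (by simpa [S, IsAlgClosed.card_aroots_eq_natDegree] using
      hmonic.pow_natDegree_le_prod_normSq_add hq.pos habs' (hpos _).ne')
  have hsq : ((f.eval q : ℤ) : ℝ) ^ 2 ≤ ((q : ℝ) ^ g * (4 * q - 1) ^ g) ^ 2 := by
    rw [hmonic.sq_eval_eq_prod_four_mul_sq_sub habs']
    convert hamgm using 1
    · simp only [S, Multiset.map_map, Function.comp_def]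
    · rw [hcard, ← mul_pow, ← pow_mul, mul_comm g]
      ring
  have hq1 : (1 : ℤ) ≤ q := by exact_mod_cast hq.one_lt.le
  exact (pow_le_pow_iff_left₀ (hpos q).le (mul_nonneg (by positivity) (pow_nonneg (by linarith) _))
    two_ne_zero).1 (by exact_mod_cast hsq)

/-- If `f ∈ ℤ[X]` is monic of degree `2g`, all complex roots of `f` have
absolute value `q`, and `f` has no real roots, then `0 < f(q) ≤ q^g (4q - 1)^g`. -/
theorem weil_poly_l_value_bound (q : ℕ) (hq : IsPrimePow q) (g : ℕ) (hg : 1 ≤ g)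
    (f : Polynomial ℤ) (hmonic : f.Monic) (hdeg : f.natDegree = 2 * g)
    (habs : ∀ z : ℂ, Polynomial.aeval z f = 0 → ‖z‖ = q)
    (hreal : ∀ x : ℝ, Polynomial.aeval x f ≠ 0) :
    0 < f.eval (q : ℤ) ∧ f.eval (q : ℤ) ≤ (q : ℤ) ^ g * (4 * q - 1) ^ g :=
  weil_poly_l_value_bound_general q hq g f hmonic hdeg habs hreal
end
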